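/- The subgroup Γ_L of SL(2,ℝ) generated by the matrices {A n, B n : n ∈ ℤ} is not finitely generated: there is no finite subset of SL(2,ℝ) generating Γ_L. -/

import Mathlib

open UpperHalfPlane MatrixGroups

noncomputable section

/-- The generator `A n = !![8n+4, −(1+8n(8n+4)); 1, −8n]` of the Loch Ness monster group. -/
def A (n : ℤ) : SL(2, ℝ) :=
  ⟨!![8 * (n : ℝ) + 4, -(1 + 8 * (n : ℝ) * (8 * (n : ℝ) + 4)); 1, -(8 * (n : ℝ))], by
    rw [Matrix.det_fin_two_of]; ring⟩

/-- The generator `B n = !![8n+6, −1−(8n+2)(8n+6); 1, −(8n+2)]` of the Loch Ness monster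
group. -/
def B (n : ℤ) : SL(2, ℝ) :=
  ⟨!![8 * (n : ℝ) + 6, -1 - (8 * (n : ℝ) + 2) * (8 * (n : ℝ) + 6); 1, -(8 * (n : ℝ) + 2)], by
    rw [Matrix.det_fin_two_of]; ring⟩

/-- The subgroup of `SL(2,ℝ)` generated by the `A n` and `B n`, `n ∈ ℤ`. -/
def ΓL : Subgroup SL(2, ℝ) := Subgroup.closure (Set.range A ∪ Set.range B)

/-! The generators are `A n = g (8n)` and `B n = g (8n+2)`, where `g t = pingPongGen t` acts
on `ℍ` by `z ↦ t + 4 - 1/(z - t)`. Hence `g t` maps the complement of the closed unit half-disc about `t`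
into the closed unit half-disc about `t + 4`. Over all generators the centres `t` and `t + 4`
are pairwise distinct even integers, so these half-discs are pairwise disjoint, and the ping-pong
lemma shows that the generators form a free basis of `Γ_L`. A free group on an infinite basis is
not finitely generated: a finite set lies in the subgroup generated by finitely many basis
elements, and a homomorphism to `ℤ` shows that this subgroup misses every other basis element. -/

open Pointwise

namespace Subgroup

variable {G : Type*} [Group G]

theorem exists_finite_subset_of_mem_closure {X : Set G} {g : G} (hg : g ∈ closure X) :
    ∃ T ⊆ X, T.Finite ∧ g ∈ closure T := by
  induction hg using closure_induction with
  | mem x hx => exact ⟨{x}, by simpa using hx, Set.finite_singleton x, subset_closure rfl⟩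
  | one => exact ⟨∅, Set.empty_subset X, Set.finite_empty, one_mem _⟩
  | mul x y _ _ hx hy =>
    obtain ⟨T₁, hT₁X, hT₁, hxT₁⟩ := hx
    obtain ⟨T₂, hT₂X, hT₂, hyT₂⟩ := hy
    exact ⟨T₁ ∪ T₂, Set.union_subset hT₁X hT₂X, hT₁.union hT₂,
      mul_mem (closure_mono Set.subset_union_left hxT₁)
        (closure_mono Set.subset_union_right hyT₂)⟩
  | inv x _ hx =>
    obtain ⟨T, hTX, hT, hxT⟩ := hx
    exact ⟨T, hTX, hT, inv_mem hxT⟩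

theorem exists_finite_subset_of_subset_closure {X F : Set G} (hF : F.Finite)
    (hFX : F ⊆ closure X) : ∃ T ⊆ X, T.Finite ∧ F ⊆ closure T := by
  choose T hTX hT hgT using fun g : F => exists_finite_subset_of_mem_closure (hFX g.2)
  have := hF.to_subtype
  exact ⟨⋃ g, T g, Set.iUnion_subset hTX, Set.finite_iUnion hT,
    fun g hg => closure_mono (Set.subset_iUnion T ⟨g, hg⟩) (hgT ⟨g, hg⟩)⟩

end Subgroup

namespace FreeGroup

variable {ι : Type*}

theorem of_notMem_closure_image_compl (i : ι) :
    of i ∉ Subgroup.closure (of '' {i}ᶜ) := by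
  classical
  let φ : FreeGroup ι →* Multiplicative ℤ :=
    lift fun j => if j = i then Multiplicative.ofAdd 1 else 1
  have hφ : Subgroup.closure (of '' {i}ᶜ) ≤ φ.ker :=
    (Subgroup.closure_le _).2 (by rintro _ ⟨j, hj, rfl⟩; simp [φ, Set.mem_compl_singleton_iff.1 hj])
  intro hi
  simpa [φ] using hφ hi

variable {G : Type*} [Group G] {a : ι → G}

theorem apply_notMem_closure_image_compl_of_injective_lift
    (ha : Function.Injective (lift a)) (i : ι) : a i ∉ Subgroup.closure (a '' {i}ᶜ) := by
  have himage : a '' {i}ᶜ = lift a '' (of '' {i}ᶜ) := by rw [Set.image_image]; simp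
  rw [himage, ← MonoidHom.map_closure]
  rintro ⟨w, hw, hwa⟩
  rw [← lift_apply_of (f := a)] at hwa
  exact of_notMem_closure_image_compl i (ha hwa ▸ hw)

theorem not_fg_closure_range_of_injective_lift [Infinite ι]
    (ha : Function.Injective (lift a)) : ¬ (Subgroup.closure (Set.range a)).FG := by
  rintro hfg
  obtain ⟨F, hF, hFfin⟩ := (Subgroup.fg_iff _).1 hfg
  obtain ⟨T, hTa, hTfin, hFT⟩ :=
    Subgroup.exists_finite_subset_of_subset_closure hFfin (hF ▸ Subgroup.subset_closure)
  obtain ⟨i, hi⟩ : ∃ i, a i ∉ T := by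
    by_contra! h
    have a_inj : Function.Injective a := fun x y h => of_injective (ha (by simpa using h))
    exact Set.infinite_range_of_injective a_inj (hTfin.subset (Set.range_subset_iff.2 h))
  have hT : T ⊆ a '' {i}ᶜ := by
    intro t ht
    obtain ⟨j, rfl⟩ := hTa ht
    exact ⟨j, fun hji => hi (hji ▸ ht), rfl⟩
  refine apply_notMem_closure_image_compl_of_injective_lift ha i (Subgroup.closure_mono hT ?_)
  exact (Subgroup.closure_le _).2 hFT (hF ▸ Subgroup.subset_closure (Set.mem_range_self i))

end FreeGroup

theorem Set.inv_smul_compl_subset_of_smul_compl_subset {G α : Type*} [Group G] [MulAction G α]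
    {g : G} {X Y : Set α} (h : g • Yᶜ ⊆ X) : g⁻¹ • Xᶜ ⊆ Y := by
  rw [← Set.subset_smul_set_iff, Set.compl_subset_comm, ← Set.smul_set_compl]
  exact h

def halfDisc (c : ℝ) : Set ℍ := {z | ‖(z : ℂ) - c‖ ≤ 1}

theorem halfDisc_nonempty (c : ℝ) : (halfDisc c).Nonempty :=
  ⟨⟨c + Complex.I, by simp⟩, by simp [halfDisc]⟩

theorem abs_re_sub_lt_one_of_mem_halfDisc {c : ℝ} {z : ℍ} (hz : z ∈ halfDisc c) :
    |z.re - c| < 1 := by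
  have hre : |((z : ℂ) - c).re| < ‖(z : ℂ) - c‖ := by
    rw [Complex.abs_re_lt_norm]
    simpa using z.im_pos.ne'
  simpa using hre.trans_le hz

/-- Closed unit discs with centres at least `2` apart meet only on the real axis. -/
theorem disjoint_halfDisc {a b : ℝ} (hab : 2 ≤ |a - b|) : Disjoint (halfDisc a) (halfDisc b) := by
  refine Set.disjoint_left.2 fun z hza hzb => ?_
  have ha := abs_re_sub_lt_one_of_mem_halfDisc hza
  have hb := abs_re_sub_lt_one_of_mem_halfDisc hzb
  have := abs_sub_le a z.re b
  rw [abs_sub_comm] at ha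
  linarith

theorem disjoint_halfDisc_of_even {a b : ℤ} (ha : Even a) (hb : Even b) (hab : a ≠ b) :
    Disjoint (halfDisc a) (halfDisc b) := by
  apply disjoint_halfDisc
  have : (2 : ℤ) ≤ |a - b| := by
    obtain ⟨m, rfl⟩ := ha
    obtain ⟨n, rfl⟩ := hb
    rw [le_abs]
    omega
  exact_mod_cast this

def pingPongGen (t : ℝ) : SL(2, ℝ) :=
  ⟨!![t + 4, -1 - t * (t + 4); 1, -t], by rw [Matrix.det_fin_two_of]; ring⟩

theorem coe_pingPongGen_smul (t : ℝ) (z : ℍ) :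
    ((pingPongGen t • z : ℍ) : ℂ) = t + 4 - 1 / ((z : ℂ) - t) := by
  have hz : (z : ℂ) - t ≠ 0 := fun h => z.im_pos.ne' (by simpa using congrArg Complex.im h)
  rw [coe_specialLinearGroup_apply]
  simp only [Algebra.algebraMap_self, pingPongGen, Fin.isValue, Matrix.of_apply, Matrix.cons_val',
    Matrix.cons_val_zero, Matrix.cons_val_fin_one, Real.ringHom_apply, Complex.ofReal_add,
    Complex.ofReal_ofNat, Matrix.cons_val_one, Complex.ofReal_sub, Complex.ofReal_neg,
    Complex.ofReal_one, Complex.ofReal_mul, one_mul, ← sub_eq_add_neg, one_div]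
  field_simp
  ring

theorem pingPongGen_smul_compl_halfDisc (t : ℝ) :
    pingPongGen t • (halfDisc t)ᶜ ⊆ halfDisc (t + 4) := by
  rintro _ ⟨z, hz, rfl⟩
  simp only [halfDisc, Set.mem_compl_iff, Set.mem_ofPred_eq, not_le] at hz ⊢
  rw [coe_pingPongGen_smul]
  push_cast
  rw [show (t : ℂ) + 4 - 1 / ((z : ℂ) - t) - (t + 4) = -(1 / ((z : ℂ) - t)) by ring, norm_neg,
    norm_div, norm_one]
  exact (div_le_one (one_pos.trans hz)).2 hz.le

theorem injective_lift_pingPongGen {ι : Type} [Nontrivial ι] (c : ι → ℤ)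
    (heven : ∀ i, Even (c i)) (hinj : Function.Injective c) (hne : ∀ i j, c i + 4 ≠ c j) :
    Function.Injective (FreeGroup.lift fun i => pingPongGen (c i)) := by
  have hcast : ∀ i, ((c i : ℝ) + 4) = ((c i + 4 : ℤ) : ℝ) := fun i => by push_cast; rfl
  have heven4 : ∀ i, Even (c i + 4) := fun i => (heven i).add (by decide)
  apply FreeGroup.injective_lift_of_ping_pong (fun i => pingPongGen (c i))
    (fun i => halfDisc ((c i : ℝ) + 4)) (fun i => halfDisc (c i))
  · exact fun i => halfDisc_nonempty _
  · intro i j hij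
    simp only [Function.onFun, hcast]
    exact disjoint_halfDisc_of_even (heven4 i) (heven4 j) (by simpa using hinj.ne hij)
  · exact fun i j hij => disjoint_halfDisc_of_even (heven i) (heven j) (hinj.ne hij)
  · intro i j
    simp only [hcast]
    exact disjoint_halfDisc_of_even (heven4 i) (heven j) (hne i j)
  · exact fun i => pingPongGen_smul_compl_halfDisc _
  · exact fun i => Set.inv_smul_compl_subset_of_smul_compl_subset
      (pingPongGen_smul_compl_halfDisc _)

theorem A_eq_pingPongGen (n : ℤ) : A n = pingPongGen (8 * n) := by
  ext i j
  fin_cases i <;> fin_cases j <;> simp [A, pingPongGen]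
  ring

theorem B_eq_pingPongGen (n : ℤ) : B n = pingPongGen (8 * n + 2) := by
  ext i j
  fin_cases i <;> fin_cases j <;> norm_num [B, pingPongGen, add_assoc]

def repellingCenter : ℤ ⊕ ℤ → ℤ := Sum.elim (fun n => 8 * n) (fun n => 8 * n + 2)

theorem ΓL_eq_closure_range_pingPongGen :
    ΓL = Subgroup.closure (Set.range fun i => pingPongGen (repellingCenter i)) := by
  rw [ΓL, ← Set.Sum.elim_range]
  congr
  funext i
  rcases i with n | n
  · simp [repellingCenter, A_eq_pingPongGen]
  · simp [repellingCenter, B_eq_pingPongGen]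

theorem injective_lift_pingPongGen_repellingCenter :
    Function.Injective (FreeGroup.lift fun i => pingPongGen (repellingCenter i)) :=
  injective_lift_pingPongGen repellingCenter
    (by rintro (n | n) <;> simp [repellingCenter, Int.even_iff])
    (by rintro (m | m) (n | n) h <;> simp [repellingCenter] at h ⊢ <;> omega)
    (by rintro (m | m) (n | n) <;> simp [repellingCenter] <;> omega)

/-- `Γ_L` is not finitely generated. -/
theorem stmt_4 : ¬ ∃ F : Set SL(2, ℝ), F.Finite ∧ Subgroup.closure F = ΓL := by
  rintro ⟨F, hF, hFΓL⟩
  exact FreeGroup.not_fg_closure_range_of_injective_lift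
    injective_lift_pingPongGen_repellingCenter
    ((Subgroup.fg_iff _).2 ⟨F, hFΓL.trans ΓL_eq_closure_range_pingPongGen, hF⟩)
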